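/- arXiv:2402.16227 — 4 statements merged into one kernel-verified Lean document; each statement's English description precedes it below -/
import Mathlib

section
/- Let S be a symmetric positive definite real n̄×n̄ matrix, τ > 0, Γ ∈ ℝ^{n_ζ×n̄}, M ∈ ℝ^{n_x×n_ζ}, a ∈ ℝ^{n_x}, and μ ∈ ℝ^{n_x}. Then the value aᵀμ − √τ · ‖ΓᵀMᵀa‖_{S⁻¹} is the least element (infimum, attained) of the set { aᵀμ + aᵀM ζ : ζ ∈ U }, where U = { Γz : z ∈ ℝ^{n̄}, zᵀSz ≤ τ }. -/
open Matrix

lemma stmt3_dot_nonneg {n : ℕ} {S : Matrix (Fin n) (Fin n) ℝ} (hS : S.PosSemidef)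
    (x : Fin n → ℝ) : 0 ≤ x ⬝ᵥ S.mulVec x := by
  simpa using hS.re_dotProduct_nonneg x

lemma stmt3_symm {n : ℕ} {S : Matrix (Fin n) (Fin n) ℝ} (hS : S.PosDef)
    (x y : Fin n → ℝ) : x ⬝ᵥ S.mulVec y = y ⬝ᵥ S.mulVec x := by
  rw [dotProduct_mulVec, ← mulVec_transpose, show Sᵀ = S from hS.isHermitian]
  exact dotProduct_comm _ _

lemma stmt3_cancel {n : ℕ} {S : Matrix (Fin n) (Fin n) ℝ} (hS : S.PosDef)
    (x : Fin n → ℝ) : S.mulVec (S⁻¹.mulVec x) = x := by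
  rw [mulVec_mulVec, mul_nonsing_inv _ ((isUnit_iff_isUnit_det _).1 hS.isUnit), one_mulVec]

/-- `aᵀμ − √τ·‖ΓᵀMᵀa‖_{S⁻¹}` is the least element (attained infimum) of
`{ aᵀμ + aᵀMζ : ζ ∈ U }` where `U = { Γz : zᵀSz ≤ τ }`. -/
theorem stmt_3 {nζ nbar nx : ℕ}
    (S : Matrix (Fin nbar) (Fin nbar) ℝ) (hS : S.PosDef)
    (τ : ℝ) (hτ : 0 < τ)
    (Γ : Matrix (Fin nζ) (Fin nbar) ℝ) (M : Matrix (Fin nx) (Fin nζ) ℝ)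
    (a μ : Fin nx → ℝ) :
    IsLeast
      { y : ℝ | ∃ z : Fin nbar → ℝ, z ⬝ᵥ S.mulVec z ≤ τ ∧
          y = a ⬝ᵥ μ + a ⬝ᵥ M.mulVec (Γ.mulVec z) }
      (a ⬝ᵥ μ - Real.sqrt τ *
        Real.sqrt ((Γᵀ.mulVec (Mᵀ.mulVec a)) ⬝ᵥ
          S⁻¹.mulVec (Γᵀ.mulVec (Mᵀ.mulVec a)))) := by
  set v : Fin nbar → ℝ := Γᵀ.mulVec (Mᵀ.mulVec a) with hv
  have hobj : ∀ w : Fin nbar → ℝ, a ⬝ᵥ M.mulVec (Γ.mulVec w) = v ⬝ᵥ w := by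
    intro w
    rw [hv, dotProduct_mulVec, dotProduct_mulVec, ← mulVec_transpose, ← mulVec_transpose]
  set α2 : ℝ := v ⬝ᵥ S⁻¹.mulVec v with hα2def
  have hα2 : 0 ≤ α2 := stmt3_dot_nonneg hS.inv.posSemidef v
  set α : ℝ := Real.sqrt α2 with hαdef
  have hαsq : α ^ 2 = α2 := Real.sq_sqrt hα2
  have hα : 0 ≤ α := Real.sqrt_nonneg _
  have hτ' : 0 ≤ Real.sqrt τ := Real.sqrt_nonneg _
  by_cases hv0 : v = 0
  · constructor
    · exact ⟨0, by simpa [Matrix.mulVec_zero] using hτ.le,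
        by simp [hobj, hv0, hv0 ▸ hα2def, hαdef]⟩
    · rintro y ⟨z, hz, rfl⟩
      rw [hobj z, hv0]
      have h0 : α2 = 0 := by simp [hα2def, hv0]
      simp [hαdef, h0]
  · have hα2pos : 0 < α2 := by simpa using hS.inv.re_dotProduct_pos hv0
    have hαpos : 0 < α := Real.sqrt_pos.2 hα2pos
    constructor
    · -- attained at z₀ = -(√τ/α) • S⁻¹ v
      refine ⟨(-(Real.sqrt τ / α)) • S⁻¹.mulVec v, ?_, ?_⟩
      · have hSinv : S.mulVec (S⁻¹.mulVec v) = v := stmt3_cancel hS v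
        have : ((-(Real.sqrt τ / α)) • S⁻¹.mulVec v) ⬝ᵥ
            S.mulVec ((-(Real.sqrt τ / α)) • S⁻¹.mulVec v)
            = (Real.sqrt τ / α) ^ 2 * α2 := by
          rw [Matrix.mulVec_smul, smul_dotProduct, dotProduct_smul, hSinv, smul_eq_mul,
            smul_eq_mul, dotProduct_comm]
          ring
        rw [this, div_pow, hαsq, Real.sq_sqrt hτ.le, div_mul_cancel₀ _ hα2pos.ne']
      · rw [hobj, dotProduct_smul, smul_eq_mul, ← hα2def]
        have : α2 = α * α := by rw [← hαsq]; ring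
        rw [this]
        field_simp
        ring
    · rintro y ⟨z, hz, rfl⟩
      rw [hobj]
      have hzS : 0 ≤ z ⬝ᵥ S.mulVec z := stmt3_dot_nonneg hS.posSemidef z
      -- Cauchy–Schwarz: (v⬝z)² ≤ α2 * (z⬝Sz)
      have key : (v ⬝ᵥ z) ^ 2 ≤ α2 * (z ⬝ᵥ S.mulVec z) := by
        set t : ℝ := -(v ⬝ᵥ z) / α2 with ht
        have hw : 0 ≤ (z + t • S⁻¹.mulVec v) ⬝ᵥ S.mulVec (z + t • S⁻¹.mulVec v) :=
          stmt3_dot_nonneg hS.posSemidef _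
        have hca : S.mulVec (S⁻¹.mulVec v) = v := stmt3_cancel hS v
        have h2 : (S⁻¹.mulVec v) ⬝ᵥ S.mulVec z = v ⬝ᵥ z := by
          rw [stmt3_symm hS _ z, hca, dotProduct_comm]
        have hexp : (z + t • S⁻¹.mulVec v) ⬝ᵥ S.mulVec (z + t • S⁻¹.mulVec v)
            = z ⬝ᵥ S.mulVec z + 2 * t * (v ⬝ᵥ z) + t ^ 2 * α2 := by
          simp only [Matrix.mulVec_add, Matrix.mulVec_smul, dotProduct_add, add_dotProduct,
            dotProduct_smul, smul_dotProduct, smul_eq_mul, smul_smul]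
          rw [h2, hca, show z ⬝ᵥ v = v ⬝ᵥ z from dotProduct_comm _ _,
            show (S⁻¹.mulVec v) ⬝ᵥ v = α2 from by rw [dotProduct_comm]]
          ring
        rw [hexp, ht] at hw
        have :z ⬝ᵥ S.mulVec z - (v ⬝ᵥ z) ^ 2 / α2 =
            z ⬝ᵥ S.mulVec z + 2 * (-(v ⬝ᵥ z) / α2) * (v ⬝ᵥ z) + (-(v ⬝ᵥ z) / α2) ^ 2 * α2 := by
          field_simp
          ring
        rw [← this] at hw
        have := div_le_iff₀ hα2pos |>.1 (by linarith : (v ⬝ᵥ z) ^ 2 / α2 ≤ z ⬝ᵥ S.mulVec z)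
        linarith [this]
      have key2 : (v ⬝ᵥ z) ^ 2 ≤ (Real.sqrt τ * α) ^ 2 := by
        have : α2 * (z ⬝ᵥ S.mulVec z) ≤ α2 * τ := by nlinarith
        calc (v ⬝ᵥ z) ^ 2 ≤ α2 * τ := le_trans key this
          _ = (Real.sqrt τ * α) ^ 2 := by
              rw [mul_pow, hαsq, Real.sq_sqrt hτ.le]; ring
      have habs : |v ⬝ᵥ z| ≤ Real.sqrt τ * α := by
        rw [← Real.sqrt_sq_eq_abs]
        calc Real.sqrt ((v ⬝ᵥ z) ^ 2) ≤ Real.sqrt ((Real.sqrt τ * α) ^ 2) :=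
              Real.sqrt_le_sqrt key2
          _ = Real.sqrt τ * α := Real.sqrt_sq (by positivity)
      linarith [neg_abs_le (v ⬝ᵥ z)]
end

section
/- Let S be a symmetric positive definite real n̄×n̄ matrix, τ > 0, Γ ∈ ℝ^{n_ζ×n̄}, M ∈ ℝ^{n_x×n_ζ}, ā ∈ ℝ^{n_x}, μ ∈ ℝ^{n_x}, b̄ ∈ ℝ, and ε ≥ 0. If āᵀμ = b̄ and √τ · ‖ΓᵀMᵀā‖_{S⁻¹} ≤ ε, then for all ζ ∈ U = { Γz : zᵀSz ≤ τ } it holds that b̄ − ε ≤ āᵀ(μ + Mζ) ≤ b̄ + ε. -/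
/-!
With `w = ΓᵀMᵀā`, the deviation `āᵀ(μ + MΓz) - b̄` equals `wᵀz`, and Cauchy–Schwarz for the
inner product defined by `S`, applied to `S⁻¹w` and `z`, gives
`|wᵀz| ≤ ‖w‖_{S⁻¹} · √(zᵀSz) ≤ √τ · ‖w‖_{S⁻¹} ≤ ε`.
-/

open Matrix

section

variable {n : Type*} [Fintype n]

theorem Matrix.PosSemidef.dotProduct_mulVec_sq_le {S : Matrix n n ℝ} (hS : S.PosSemidef)
    (u z : n → ℝ) : (u ⬝ᵥ S *ᵥ z) ^ 2 ≤ (u ⬝ᵥ S *ᵥ u) * (z ⬝ᵥ S *ᵥ z) := by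
  let := S.toSeminormedAddCommGroup hS
  let := S.toInnerProductSpace hS
  -- the inner product induced by `S` is `⟪x, y⟫ = (S *ᵥ y) ⬝ᵥ x`
  have h : (S *ᵥ z ⬝ᵥ u) * (S *ᵥ z ⬝ᵥ u) ≤ (S *ᵥ u ⬝ᵥ u) * (S *ᵥ z ⬝ᵥ z) :=
    real_inner_mul_inner_self_le u z
  simpa only [dotProduct_comm _ u, dotProduct_comm _ z, sq] using h

theorem Matrix.PosDef.dotProduct_sq_le [DecidableEq n] {S : Matrix n n ℝ} (hS : S.PosDef)
    (w z : n → ℝ) : (w ⬝ᵥ z) ^ 2 ≤ (w ⬝ᵥ S⁻¹ *ᵥ w) * (z ⬝ᵥ S *ᵥ z) := by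
  have hSw : S *ᵥ (S⁻¹ *ᵥ w) = w := by
    rw [mulVec_mulVec, mul_nonsing_inv _ ((isUnit_iff_isUnit_det S).mp hS.isUnit), one_mulVec]
  have hsymm (u : n → ℝ) : u ⬝ᵥ S *ᵥ z = S *ᵥ u ⬝ᵥ z := by
    rw [dotProduct_mulVec, ← mulVec_transpose, ← conjTranspose_eq_transpose_of_trivial,
      hS.isHermitian.eq]
  have h := hS.posSemidef.dotProduct_mulVec_sq_le (S⁻¹ *ᵥ w) z
  rwa [hsymm, hSw, dotProduct_comm (S⁻¹ *ᵥ w)] at h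

theorem Matrix.PosDef.abs_dotProduct_le [DecidableEq n] {S : Matrix n n ℝ} (hS : S.PosDef)
    {τ : ℝ} {z : n → ℝ} (hz : z ⬝ᵥ S *ᵥ z ≤ τ) (w : n → ℝ) :
    |w ⬝ᵥ z| ≤ √τ * √(w ⬝ᵥ S⁻¹ *ᵥ w) := by
  have hw : 0 ≤ w ⬝ᵥ S⁻¹ *ᵥ w := hS.inv.posSemidef.dotProduct_mulVec_nonneg w
  rw [← Real.sqrt_sq_eq_abs, ← Real.sqrt_mul' _ hw, mul_comm τ]
  gcongr
  calc (w ⬝ᵥ z) ^ 2 ≤ (w ⬝ᵥ S⁻¹ *ᵥ w) * (z ⬝ᵥ S *ᵥ z) := hS.dotProduct_sq_le w z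
    _ ≤ (w ⬝ᵥ S⁻¹ *ᵥ w) * τ := by gcongr

end

theorem stmt_5_general {nζ nbar nx : ℕ}
    (S : Matrix (Fin nbar) (Fin nbar) ℝ) (hS : S.PosDef)
    (τ : ℝ)
    (Γ : Matrix (Fin nζ) (Fin nbar) ℝ) (M : Matrix (Fin nx) (Fin nζ) ℝ)
    (abar μ : Fin nx → ℝ) (bbar ε : ℝ)
    (heq : abar ⬝ᵥ μ = bbar)
    (hbound : Real.sqrt τ *
        Real.sqrt ((Γᵀ.mulVec (Mᵀ.mulVec abar)) ⬝ᵥ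
          S⁻¹.mulVec (Γᵀ.mulVec (Mᵀ.mulVec abar))) ≤ ε) :
    ∀ z : Fin nbar → ℝ, z ⬝ᵥ S.mulVec z ≤ τ →
      bbar - ε ≤ abar ⬝ᵥ (μ + M.mulVec (Γ.mulVec z)) ∧
        abar ⬝ᵥ (μ + M.mulVec (Γ.mulVec z)) ≤ bbar + ε := by
  intro z hz
  have hadj : abar ⬝ᵥ M *ᵥ (Γ *ᵥ z) = Γᵀ *ᵥ (Mᵀ *ᵥ abar) ⬝ᵥ z := by
    simp only [dotProduct_mulVec, mulVec_transpose, vecMul_vecMul]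
  have hdev := (hS.abs_dotProduct_le hz (Γᵀ *ᵥ (Mᵀ *ᵥ abar))).trans hbound
  rw [dotProduct_add, heq, hadj]
  constructor <;> linarith [abs_le.mp hdev]

/-- If `āᵀμ = b̄` and `√τ·‖ΓᵀMᵀā‖_{S⁻¹} ≤ ε`, then for all `ζ ∈ U` we have
`b̄ − ε ≤ āᵀ(μ + Mζ) ≤ b̄ + ε`. -/
theorem stmt_5 {nζ nbar nx : ℕ}
    (S : Matrix (Fin nbar) (Fin nbar) ℝ) (hS : S.PosDef)
    (τ : ℝ) (hτ : 0 < τ)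
    (Γ : Matrix (Fin nζ) (Fin nbar) ℝ) (M : Matrix (Fin nx) (Fin nζ) ℝ)
    (abar μ : Fin nx → ℝ) (bbar ε : ℝ) (hε : 0 ≤ ε)
    (heq : abar ⬝ᵥ μ = bbar)
    (hbound : Real.sqrt τ *
        Real.sqrt ((Γᵀ.mulVec (Mᵀ.mulVec abar)) ⬝ᵥ
          S⁻¹.mulVec (Γᵀ.mulVec (Mᵀ.mulVec abar))) ≤ ε) :
    ∀ z : Fin nbar → ℝ, z ⬝ᵥ S.mulVec z ≤ τ →
      bbar - ε ≤ abar ⬝ᵥ (μ + M.mulVec (Γ.mulVec z)) ∧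
        abar ⬝ᵥ (μ + M.mulVec (Γ.mulVec z)) ≤ bbar + ε :=
  stmt_5_general S hS τ Γ M abar μ bbar ε heq hbound
end

section
/- Let S be a symmetric positive definite real n̄×n̄ matrix, τ > 0, Γ ∈ ℝ^{n_ζ×n̄}, M ∈ ℝ^{n_x×n_ζ}, H ∈ ℝ^{m×n_x} with rows h₁ᵀ,…,h_mᵀ, μ ∈ ℝ^{n_x}, b ∈ ℝ^m, μ_d ∈ ℝ^m, and reals c̃, c ≥ 0. Suppose: (i) ‖Hμ − b‖₂ ≥ c̃; (ii) ‖μ_d‖₂ ≤ c̃ − c; and (iii) (μ_d)_{m̄} ≥ √τ · ‖ΓᵀMᵀh_{m̄}‖_{S⁻¹} for every m̄ = 1,…,m. Then the original robust nonconvex norm constraint holds: ‖H(μ + Mζ) − b‖₂ ≥ c for all ζ ∈ U = { Γz : zᵀSz ≤ τ }. -/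
/-!
Row by row, `(H M Γ z)ᵢ = ⟪S⁻¹ Γᵀ Mᵀ hᵢ, z⟫_S` for the inner product `⟪x, y⟫_S = xᵀ S y`, so
Cauchy–Schwarz in that inner product bounds its absolute value by
`√τ · ‖Γᵀ Mᵀ hᵢ‖_{S⁻¹} ≤ (μ_d)ᵢ`. Hence the perturbation `H M Γ z` has Euclidean norm at most
`‖μ_d‖₂ ≤ c̃ − c`, and the reverse triangle inequality leaves `‖H(μ + MΓz) − b‖₂ ≥ c̃ − (c̃ − c)`.
-/

open Matrix

namespace Matrix.PosDef

variable {n : Type*} [Fintype n] [DecidableEq n] {S : Matrix n n ℝ}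

theorem sq_dotProduct_le (hS : S.PosDef) (a z : n → ℝ) :
    (a ⬝ᵥ z) ^ 2 ≤ (a ⬝ᵥ S⁻¹ *ᵥ a) * (z ⬝ᵥ S *ᵥ z) := by
  have hSymm : S.IsSymm := by simpa using hS.isHermitian
  have hw : S *ᵥ (S⁻¹ *ᵥ a) = a := by
    rw [mulVec_mulVec, mul_nonsing_inv _ hS.det_pos.ne'.isUnit, one_mulVec]
  have hwz : S⁻¹ *ᵥ a ⬝ᵥ S *ᵥ z = a ⬝ᵥ z := by
    rw [dotProduct_mulVec, ← mulVec_transpose, hSymm.eq, hw]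
  -- Cauchy–Schwarz for `⟪x, y⟫_S = xᵀ S y`, applied to `S⁻¹ a` and `z`.
  have hCS := S.toBilin'.apply_sq_le_of_symm
    (fun x => by rw [toBilin'_apply']; exact hS.posSemidef.dotProduct_mulVec_nonneg x)
    (LinearMap.BilinForm.isSymm_iff.mp (isSymm_toBilin'_iff_isSymm.mpr hSymm)) (S⁻¹ *ᵥ a) z
  simp only [toBilin'_apply'] at hCS
  rwa [hwz, hw, dotProduct_comm (S⁻¹ *ᵥ a)] at hCS

theorem abs_dotProduct_le_s8 (hS : S.PosDef) {τ : ℝ} {z : n → ℝ} (hz : z ⬝ᵥ S *ᵥ z ≤ τ)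
    (a : n → ℝ) : |a ⬝ᵥ z| ≤ √τ * √(a ⬝ᵥ S⁻¹ *ᵥ a) := by
  have ha : 0 ≤ a ⬝ᵥ S⁻¹ *ᵥ a := hS.inv.posSemidef.dotProduct_mulVec_nonneg a
  rw [← Real.sqrt_mul' _ ha, mul_comm]
  exact Real.abs_le_sqrt ((hS.sq_dotProduct_le a z).trans (mul_le_mul_of_nonneg_left hz ha))

end Matrix.PosDef

section EuclideanSum

variable {ι : Type*} [Fintype ι]

theorem sqrt_sum_sq_eq_norm (x : ι → ℝ) : √(∑ i, x i ^ 2) = ‖WithLp.toLp 2 x‖ := by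
  simp [EuclideanSpace.norm_eq]

theorem sqrt_sum_sq_le_of_abs_le {v d : ι → ℝ} (h : ∀ i, |v i| ≤ d i) :
    √(∑ i, v i ^ 2) ≤ √(∑ i, d i ^ 2) :=
  Real.sqrt_le_sqrt <| Finset.sum_le_sum fun i _ => sq_le_sq.mpr ((h i).trans (le_abs_self _))

theorem sqrt_sum_sq_sub_le (u v : ι → ℝ) :
    √(∑ i, u i ^ 2) - √(∑ i, v i ^ 2) ≤ √(∑ i, (u i + v i) ^ 2) := by
  have := norm_sub_le_norm_add (WithLp.toLp 2 u) (WithLp.toLp 2 v)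
  rwa [← WithLp.toLp_add, ← sqrt_sum_sq_eq_norm, ← sqrt_sum_sq_eq_norm, ← sqrt_sum_sq_eq_norm] at this

end EuclideanSum

theorem stmt_8_general {nζ nbar nx m : ℕ}
    (S : Matrix (Fin nbar) (Fin nbar) ℝ) (hS : S.PosDef)
    (τ : ℝ)
    (Γ : Matrix (Fin nζ) (Fin nbar) ℝ) (M : Matrix (Fin nx) (Fin nζ) ℝ)
    (H : Matrix (Fin m) (Fin nx) ℝ)
    (μ : Fin nx → ℝ) (b : Fin m → ℝ) (μd : Fin m → ℝ)
    (ctilde c : ℝ)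
    (h1 : Real.sqrt (∑ i, (H.mulVec μ i - b i) ^ 2) ≥ ctilde)
    (h2 : Real.sqrt (∑ mb, (μd mb) ^ 2) ≤ ctilde - c)
    (h3 : ∀ mb : Fin m,
      Real.sqrt τ * Real.sqrt ((Γᵀ.mulVec (Mᵀ.mulVec (H mb))) ⬝ᵥ
        S⁻¹.mulVec (Γᵀ.mulVec (Mᵀ.mulVec (H mb)))) ≤ μd mb) :
    ∀ z : Fin nbar → ℝ, z ⬝ᵥ S.mulVec z ≤ τ →
      Real.sqrt (∑ i, (H.mulVec (μ + M.mulVec (Γ.mulVec z)) i - b i) ^ 2) ≥ c := by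
  intro z hz
  have hrow : ∀ i, |(H *ᵥ (M *ᵥ (Γ *ᵥ z))) i| ≤ μd i := fun i => by
    have hrow_eq : (H *ᵥ (M *ᵥ (Γ *ᵥ z))) i = Γᵀ *ᵥ (Mᵀ *ᵥ H i) ⬝ᵥ z := by
      simp only [mulVec, dotProduct_mulVec, mulVec_transpose, vecMul_vecMul]
    exact hrow_eq ▸ (hS.abs_dotProduct_le_s8 hz _).trans (h3 i)
  calc c ≤ √(∑ i, ((H *ᵥ μ) i - b i) ^ 2) - √(∑ i, (H *ᵥ (M *ᵥ (Γ *ᵥ z))) i ^ 2) := by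
        linarith [(sqrt_sum_sq_le_of_abs_le hrow).trans h2]
    _ ≤ _ := sqrt_sum_sq_sub_le _ _
    _ = _ := by simp only [mulVec_add, Pi.add_apply, add_sub_right_comm]

/-- The SOCP reformulation implies the original robust nonconvex norm constraint:
if `‖Hμ − b‖₂ ≥ c̃`, `‖μ_d‖₂ ≤ c̃ − c`, and each `(μ_d)_{m̄}` bounds
`√τ·‖ΓᵀMᵀh_{m̄}‖_{S⁻¹}`, then `‖H(μ + Mζ) − b‖₂ ≥ c` for all `ζ ∈ U`. -/
theorem stmt_8 {nζ nbar nx m : ℕ}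
    (S : Matrix (Fin nbar) (Fin nbar) ℝ) (hS : S.PosDef)
    (τ : ℝ) (hτ : 0 < τ)
    (Γ : Matrix (Fin nζ) (Fin nbar) ℝ) (M : Matrix (Fin nx) (Fin nζ) ℝ)
    (H : Matrix (Fin m) (Fin nx) ℝ)
    (μ : Fin nx → ℝ) (b : Fin m → ℝ) (μd : Fin m → ℝ)
    (ctilde c : ℝ) (hctilde : 0 ≤ ctilde) (hc : 0 ≤ c)
    (h1 : Real.sqrt (∑ i, (H.mulVec μ i - b i) ^ 2) ≥ ctilde)
    (h2 : Real.sqrt (∑ mb, (μd mb) ^ 2) ≤ ctilde - c)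
    (h3 : ∀ mb : Fin m,
      Real.sqrt τ * Real.sqrt ((Γᵀ.mulVec (Mᵀ.mulVec (H mb))) ⬝ᵥ
        S⁻¹.mulVec (Γᵀ.mulVec (Mᵀ.mulVec (H mb)))) ≤ μd mb) :
    ∀ z : Fin nbar → ℝ, z ⬝ᵥ S.mulVec z ≤ τ →
      Real.sqrt (∑ i, (H.mulVec (μ + M.mulVec (Γ.mulVec z)) i - b i) ^ 2) ≥ c :=
  stmt_8_general S hS τ Γ M H μ b μd ctilde c h1 h2 h3
end

section
/- (Robust linear chance constraint reformulation, scalarized) Let S be a symmetric positive definite real n̄×n̄ matrix, τ > 0, Γ ∈ ℝ^{n_ζ×n̄}, M ∈ ℝ^{n_x×n_ζ}, a ∈ ℝ^{n_x}, μ ∈ ℝ^{n_x}, and reals b, α, σ ≥ 0, p ∈ (0,1). Let η > 0 be such that the standard Gaussian measure N(0,1) assigns probability p to the set [η, ∞). Let X be a real random variable on a probability space with law equal to the Gaussian measure N(0, σ²). If aᵀμ + √τ·‖ΓᵀMᵀa‖_{S⁻¹} ≤ b − α and η·σ ≤ α, then for every ζ ∈ U = { Γz : zᵀSz ≤ τ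 }, the probability ℙ( aᵀ(μ + Mζ) + X > b ) ≤ p. -/
/-!
For `ζ = Γz` in the ellipsoid, the weighted Cauchy–Schwarz inequality in the inner product
`⟨x, y⟩ = xᵀS⁻¹y` bounds the worst case `aᵀMΓz = (ΓᵀMᵀa)ᵀz` by `√τ ‖ΓᵀMᵀa‖_{S⁻¹}`, so the
deterministic part of the constraint stays below `b − α`. The event then forces `X > α ≥ ησ`,
and `X = σ·Z` with `Z` standard normal gives `ℙ(X > ησ) ≤ ℙ(Z ≥ η) = p`.
-/

open Matrix MeasureTheory ProbabilityTheory

theorem Matrix.PosDef.dotProduct_le_sqrt_mul_sqrt {n : Type*} [Fintype n] [DecidableEq n]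
    {S : Matrix n n ℝ} (hS : S.PosDef) (v z : n → ℝ) :
    v ⬝ᵥ z ≤ √(v ⬝ᵥ S⁻¹ *ᵥ v) * √(z ⬝ᵥ S *ᵥ z) := by
  let _ := S⁻¹.toSeminormedAddCommGroup hS.inv.posSemidef
  let _ := S⁻¹.toInnerProductSpace hS.inv.posSemidef
  have inner_eq (x y : n → ℝ) : inner ℝ x y = x ⬝ᵥ S⁻¹ *ᵥ y := by
    change (S⁻¹ *ᵥ y) ⬝ᵥ star x = _
    rw [star_trivial, dotProduct_comm]
  have hSz : S⁻¹ *ᵥ (S *ᵥ z) = z := by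
    rw [mulVec_mulVec, nonsing_inv_mul _ (isUnit_iff_isUnit_det S |>.mp hS.isUnit), one_mulVec]
  have hcs := real_inner_mul_inner_self_le v (S *ᵥ z)
  rw [inner_eq, inner_eq, inner_eq, hSz, dotProduct_comm (S *ᵥ z)] at hcs
  rw [← Real.sqrt_mul (by simpa using hS.inv.posSemidef.dotProduct_mulVec_nonneg v)]
  exact (le_abs_self _).trans (Real.abs_le_sqrt (by rwa [sq]))

theorem gaussianReal_Ioi_mul_le {σ : ℝ} (hσ : 0 ≤ σ) (η : ℝ) :
    gaussianReal 0 ⟨σ ^ 2, sq_nonneg σ⟩ (Set.Ioi (η * σ)) ≤ gaussianReal 0 1 (Set.Ici η) := by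
  have hmap : (gaussianReal 0 1).map (σ * ·) = gaussianReal 0 ⟨σ ^ 2, sq_nonneg σ⟩ := by
    rw [gaussianReal_map_const_mul, mul_zero, mul_one]
    rfl
  rw [← hmap, Measure.map_apply (measurable_const_mul σ) measurableSet_Ioi]
  refine measure_mono fun x hx => ?_
  simp only [Set.mem_preimage, Set.mem_Ioi, Set.mem_Ici] at hx ⊢
  nlinarith

theorem Matrix.PosDef.dotProduct_le_of_dotProduct_mulVec_le {n : Type*} [Fintype n]
    [DecidableEq n] {S : Matrix n n ℝ} (hS : S.PosDef) {τ : ℝ} (v : n → ℝ) {z : n → ℝ}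
    (hz : z ⬝ᵥ S *ᵥ z ≤ τ) :
    v ⬝ᵥ z ≤ √τ * √(v ⬝ᵥ S⁻¹ *ᵥ v) := by
  rw [mul_comm]
  exact (hS.dotProduct_le_sqrt_mul_sqrt v z).trans <|
    mul_le_mul_of_nonneg_left (Real.sqrt_le_sqrt hz) (Real.sqrt_nonneg _)

theorem stmt_14_general {nζ nbar nx : ℕ}
    {Ω : Type*} [MeasurableSpace Ω] (P : Measure Ω) [IsProbabilityMeasure P]
    (S : Matrix (Fin nbar) (Fin nbar) ℝ) (hS : S.PosDef)
    (τ : ℝ)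
    (Γ : Matrix (Fin nζ) (Fin nbar) ℝ) (M : Matrix (Fin nx) (Fin nζ) ℝ)
    (a μ : Fin nx → ℝ) (b α σ p η : ℝ)
    (hσ : 0 ≤ σ)
    (hηp : gaussianReal 0 1 (Set.Ici η) = ENNReal.ofReal p)
    (X : Ω → ℝ)
    (hX : P.map X = gaussianReal 0 ⟨σ ^ 2, sq_nonneg σ⟩)
    (h1 : a ⬝ᵥ μ + Real.sqrt τ *
        Real.sqrt ((Γᵀ.mulVec (Mᵀ.mulVec a)) ⬝ᵥ
          S⁻¹.mulVec (Γᵀ.mulVec (Mᵀ.mulVec a))) ≤ b - α)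
    (h2 : η * σ ≤ α) :
    ∀ z : Fin nbar → ℝ, z ⬝ᵥ S.mulVec z ≤ τ →
      P {ω | a ⬝ᵥ (μ + M.mulVec (Γ.mulVec z)) + X ω > b} ≤ ENNReal.ofReal p := by
  intro z hz
  have hmean : a ⬝ᵥ (μ + M *ᵥ Γ *ᵥ z) ≤ b - α := by
    have hadj : a ⬝ᵥ M *ᵥ Γ *ᵥ z = (Γᵀ *ᵥ Mᵀ *ᵥ a) ⬝ᵥ z := by
      rw [dotProduct_mulVec, dotProduct_mulVec, ← mulVec_transpose, ← mulVec_transpose]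
    rw [dotProduct_add, hadj]
    linarith [hS.dotProduct_le_of_dotProduct_mulVec_le (Γᵀ *ᵥ Mᵀ *ᵥ a) hz]
  -- The variance is a subtype literal, so instance search does not see a Gaussian law here.
  have hXm : AEMeasurable X P := aemeasurable_of_map_neZero <| by
    rw [hX]
    exact ⟨(instIsProbabilityMeasureGaussianReal _ _).ne_zero⟩
  calc P {ω | a ⬝ᵥ (μ + M *ᵥ Γ *ᵥ z) + X ω > b}
      ≤ P (X ⁻¹' Set.Ioi (η * σ)) := measure_mono fun ω hω => by
        simp only [Set.mem_ofPred_eq, Set.mem_preimage, Set.mem_Ioi] at hω ⊢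
        linarith
    _ = gaussianReal 0 ⟨σ ^ 2, sq_nonneg σ⟩ (Set.Ioi (η * σ)) := by
        rw [← hX, Measure.map_apply_of_aemeasurable hXm measurableSet_Ioi]
    _ ≤ gaussianReal 0 1 (Set.Ici η) := gaussianReal_Ioi_mul_le hσ η
    _ = ENNReal.ofReal p := hηp

/-- Robust linear chance constraint reformulation (scalarized): if
`aᵀμ + √τ·‖ΓᵀMᵀa‖_{S⁻¹} ≤ b − α` and `η·σ ≤ α`, where `η` is the upper `p`-quantile
of the standard Gaussian and `X ~ N(0, σ²)`, then for every `ζ ∈ U`,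
`ℙ(aᵀ(μ + Mζ) + X > b) ≤ p`. -/
theorem stmt_14 {nζ nbar nx : ℕ}
    {Ω : Type*} [MeasurableSpace Ω] (P : Measure Ω) [IsProbabilityMeasure P]
    (S : Matrix (Fin nbar) (Fin nbar) ℝ) (hS : S.PosDef)
    (τ : ℝ) (hτ : 0 < τ)
    (Γ : Matrix (Fin nζ) (Fin nbar) ℝ) (M : Matrix (Fin nx) (Fin nζ) ℝ)
    (a μ : Fin nx → ℝ) (b α σ p η : ℝ)
    (hσ : 0 ≤ σ) (hp0 : 0 < p) (hp1 : p < 1) (hη : 0 < η)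
    (hηp : gaussianReal 0 1 (Set.Ici η) = ENNReal.ofReal p)
    (X : Ω → ℝ)
    (hX : P.map X = gaussianReal 0 ⟨σ ^ 2, sq_nonneg σ⟩)
    (h1 : a ⬝ᵥ μ + Real.sqrt τ *
        Real.sqrt ((Γᵀ.mulVec (Mᵀ.mulVec a)) ⬝ᵥ
          S⁻¹.mulVec (Γᵀ.mulVec (Mᵀ.mulVec a))) ≤ b - α)
    (h2 : η * σ ≤ α) :
    ∀ z : Fin nbar → ℝ, z ⬝ᵥ S.mulVec z ≤ τ →
      P {ω | a ⬝ᵥ (μ + M.mulVec (Γ.mulVec z)) + X ω > b} ≤ ENNReal.ofReal p :=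
  stmt_14_general P S hS τ Γ M a μ b α σ p η hσ hηp X hX h1 h2
end
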